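/- arXiv:2512.19295 — 2 statements merged into one kernel-verified Lean document; each statement's English description precedes it below -/
import Mathlib

section
/- Let n ≥ 1 and let Δ be a finitely generated residually finite group having the same finite quotients as the torsion-free lamplighter group Γ_n = ℤ^n ≀ ℤ. Let U be a normal subgroup of Δ contained in the derived subgroup [Δ, Δ] and of finite index in [Δ, Δ], and let T = [Δ, Δ]/U be the resulting finite quotient group. Then the image of the natural homomorphism Δ → Aut(T) induced by conjugation (which is well defined since conjugation by elements of Δ preserves both [Δ, Δ] and U) is a finite cyclic group. -/
/-!
Put `G = Δ/U`, so that `T = [G,G]` is finite. A finitely generated group with finite derived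
subgroup has a centre of finite index, and raising that finitely generated abelian centre to
the exponent of its torsion gives a normal subgroup `N` of finite index with `N ∩ [G,G] = 1`.
The finite group `G/N` is a quotient of `Δ`, hence of `ℤ^n ≀ ℤ`, so it is abelian-by-cyclic:
some abelian normal `A ⊴ G/N` has cyclic quotient, and then `[G/N, G/N] ≤ A`. An element of `G`
mapping into `A` commutes modulo `N` with every element of `[G,G]`, so their commutators lie in
`N ∩ [G,G] = 1`. Hence the conjugation action of `G` on `T` factors through the cyclic group
`(G/N)/A`.
-/

open LaurentPolynomial

/-- The base group of the torsion-free lamplighter group: the (additive group of the)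
free module of rank `n` over the Laurent polynomial ring `ℤ[T,T⁻¹]`. -/
abbrev LampBase (n : ℕ) : Type := Fin n → LaurentPolynomial ℤ

/-- The shift automorphism of the base: multiplication by `T^z` in each coordinate. -/
noncomputable def lampShift (n : ℕ) (z : ℤ) : LampBase n ≃+ LampBase n where
  toFun v := fun i => T z * v i
  invFun v := fun i => T (-z) * v i
  left_inv v := by funext i; simp [← mul_assoc, ← T_add]
  right_inv v := by funext i; simp [← mul_assoc, ← T_add]
  map_add' v w := by funext i; simp [mul_add]

/-- The action of `ℤ` on the base group, where `1` acts by multiplication by `T`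
in each coordinate. -/
noncomputable def lampAction (n : ℕ) :
    Multiplicative ℤ →* MulAut (Multiplicative (LampBase n)) where
  toFun z := AddEquiv.toMultiplicative (lampShift n z.toAdd)
  map_one' := by
    refine MulEquiv.ext fun v => ?_
    show Multiplicative.ofAdd ((lampShift n (1 : Multiplicative ℤ).toAdd) v.toAdd) = v
    simp [lampShift]
  map_mul' z w := by
    refine MulEquiv.ext fun v => ?_
    show Multiplicative.ofAdd ((lampShift n (z * w).toAdd) v.toAdd)
        = Multiplicative.ofAdd ((lampShift n z.toAdd)
            (Multiplicative.ofAdd ((lampShift n w.toAdd) v.toAdd)).toAdd)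
    simp only [toAdd_mul, toAdd_ofAdd, lampShift, AddEquiv.coe_mk, Equiv.coe_fn_mk]
    congr 1
    funext i
    rw [T_add, mul_assoc]

/-- The torsion-free lamplighter group `ℤ^n ≀ ℤ`, realized as the semidirect product
of the free `ℤ[T,T⁻¹]`-module of rank `n` by `ℤ`, where `1 ∈ ℤ` acts by multiplication
by `T` in each coordinate. -/
abbrev Lamplighter (n : ℕ) : Type :=
  SemidirectProduct (Multiplicative (LampBase n)) (Multiplicative ℤ) (lampAction n)

/-- Two groups have the same finite quotients if every finite group is a quotient of one
iff it is a quotient of the other. -/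
def SameFiniteQuotients (G H : Type*) [Group G] [Group H] : Prop :=
  ∀ (Q : Type) (_ : Group Q) (_ : Finite Q),
    (∃ f : G →* Q, Function.Surjective f) ↔ (∃ f : H →* Q, Function.Surjective f)

/-- A group is residually finite if every nontrivial element is detected by a homomorphism
to some finite group. -/
def ResiduallyFinite (G : Type*) [Group G] : Prop :=
  ∀ g : G, g ≠ 1 → ∃ (Q : Type) (_ : Group Q) (_ : Finite Q) (f : G →* Q), f g ≠ 1

/-- The natural conjugation action of `Δ` on the finite quotient `T = [Δ,Δ]/U`
(realized canonically as the derived subgroup of `Δ/U`, which is the isomorphic image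
of `[Δ,Δ]/U` when `U ≤ [Δ,Δ]`): `g ∈ Δ` acts on `T` by conjugation. -/
def conjOnCommutatorQuot {Δ : Type*} [Group Δ] (U : Subgroup Δ) [U.Normal] :
    Δ →* MulAut ↥(commutator (Δ ⧸ U)) :=
  MulAut.conjNormal.comp (QuotientGroup.mk' U)

open scoped commutatorElement IsMulCommutative

theorem Subgroup.map_commutator_of_surjective {G H : Type*} [Group G] [Group H] (f : G →* H)
    (hf : Function.Surjective f) : (_root_.commutator G).map f = _root_.commutator H := by
  rw [_root_.commutator_def, _root_.commutator_def, map_commutator, map_top_of_surjective f hf]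

theorem Subgroup.finite_map_of_finiteIndex_ker_subgroupOf {G H : Type*} [Group G] [Group H]
    (f : G →* H) (K : Subgroup G) [(f.ker.subgroupOf K).FiniteIndex] : Finite (K.map f) := by
  have : (f.subgroupMap K).ker.FiniteIndex := by rwa [Subgroup.ker_subgroupMap]
  exact Finite.of_equiv _
    (QuotientGroup.quotientKerEquivOfSurjective _ (f.subgroupMap_surjective K)).toEquiv

theorem CommGroup.exists_pow_eq_one_of_isOfFinOrder (A : Type*) [CommGroup A] [Group.FG A] :
    ∃ e ≠ 0, ∀ a : A, IsOfFinOrder a → a ^ e = 1 := by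
  have : Module.Finite ℤ (Additive A) :=
    Module.Finite.iff_addGroup_fg.mpr (GroupFG.iff_add_fg.mp ‹_›)
  have : Group.FG (torsion A) := by
    rw [Group.fg_iff_subgroup_fg, Subgroup.fg_iff_add_fg]
    exact (Submodule.fg_iff_addSubgroup_fg _).mp (IsNoetherian.noetherian
      (AddSubgroup.toIntSubmodule (Subgroup.toAddSubgroup (torsion A))))
  have : Finite (torsion A) :=
    finite_of_fg_isMulTorsion _ fun x => Submonoid.isOfFinOrder_coe.mp x.2
  refine ⟨Monoid.exponent (torsion A), Monoid.exponent_ne_zero_of_finite, fun a ha => ?_⟩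
  exact congrArg Subtype.val (Monoid.pow_exponent_eq_one (⟨a, ha⟩ : torsion A))

theorem Subgroup.normal_of_le_center {G : Type*} [Group G] {H : Subgroup G}
    (h : H ≤ center G) : H.Normal :=
  ⟨fun x hx g => by rwa [mem_center_iff.mp (h hx) g, mul_inv_cancel_right]⟩

theorem exists_normal_finiteIndex_inf_commutator_eq_bot (G : Type*) [Group G] [Group.FG G]
    [Finite (commutator G)] :
    ∃ N : Subgroup G, N.Normal ∧ N.FiniteIndex ∧ N ⊓ commutator G = ⊥ := by
  -- this is what the instance `Subgroup.finiteIndex_center` asks for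
  have : Finite (commutatorSet G) := (Set.toFinite (commutator G : Set G)).subset
    (commutator_eq_closure G ▸ Subgroup.subset_closure)
  obtain ⟨e, he, hexp⟩ := CommGroup.exists_pow_eq_one_of_isOfFinOrder (Subgroup.center G)
  set K := (powMonoidHom e : Subgroup.center G →* Subgroup.center G).range
  have : K.FiniteIndex := Subgroup.finiteIndex_range_powMonoidHom_of_fg _ he
  refine ⟨K.map (Subgroup.center G).subtype, ?_, ⟨?_⟩, ?_⟩
  · exact Subgroup.normal_of_le_center (Subgroup.map_subtype_le K)
  · rw [Subgroup.index_map_subtype]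
    exact mul_ne_zero K.index_ne_zero_of_finite (Subgroup.center G).index_ne_zero_of_finite
  · rw [eq_bot_iff]
    rintro _ ⟨⟨_, ⟨z, rfl⟩, rfl⟩, hz⟩
    have hze : IsOfFinOrder (z ^ e) := Submonoid.isOfFinOrder_coe.mp <|
      (commutator G).subtype.isOfFinOrder (isOfFinOrder_of_finite (⟨_, hz⟩ : commutator G))
    simp [hexp z (hze.of_pow he)]

def IsAbelianByCyclic (G : Type*) [Group G] : Prop :=
  ∃ (A : Subgroup G) (_ : A.Normal), IsMulCommutative A ∧ IsCyclic (G ⧸ A)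

theorem IsAbelianByCyclic.of_surjective {G H : Type*} [Group G] [Group H]
    (hG : IsAbelianByCyclic G) (f : G →* H) (hf : Function.Surjective f) :
    IsAbelianByCyclic H := by
  obtain ⟨A, hA, _, _⟩ := hG
  have : (A.map f).Normal := hA.map f hf
  exact ⟨A.map f, this, inferInstance, isCyclic_of_surjective _ <|
    QuotientGroup.map_surjective_of_surjective _ _ _
      (QuotientGroup.mk_surjective.comp hf) (Subgroup.le_comap_map f A)⟩

theorem isAbelianByCyclic_lamplighter (n : ℕ) : IsAbelianByCyclic (Lamplighter n) := by
  refine ⟨SemidirectProduct.rightHom.ker, inferInstance, ?_, isCyclic_of_surjective _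
    (QuotientGroup.quotientKerEquivOfSurjective _
      SemidirectProduct.rightHom_surjective).symm.surjective⟩
  rw [← SemidirectProduct.range_inl_eq_ker_rightHom]
  infer_instance

theorem isCyclic_range_of_ker_le {G H K : Type*} [Group G] [Group H] [Group K] [IsCyclic K]
    (ψ : G →* K) (hψ : Function.Surjective ψ) (φ : G →* H) (h : ψ.ker ≤ φ.ker) :
    IsCyclic φ.range := by
  have : IsCyclic (G ⧸ ψ.ker) := isCyclic_of_surjective _
    (QuotientGroup.quotientKerEquivOfSurjective ψ hψ).symm.surjective
  exact isCyclic_of_surjective _ (QuotientGroup.lift_surjective_of_surjective ψ.ker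
    φ.rangeRestrict φ.rangeRestrict_surjective (by rwa [MonoidHom.ker_rangeRestrict]))

theorem comap_le_ker_conjNormal {G : Type*} [Group G] {N : Subgroup G} [N.Normal]
    (hN : N ⊓ commutator G = ⊥) {A : Subgroup (G ⧸ N)} [IsMulCommutative A]
    (hA : commutator (G ⧸ N) ≤ A) :
    A.comap (QuotientGroup.mk' N) ≤ (MulAut.conjNormal : G →* MulAut (commutator G)).ker := by
  intro δ hδ
  refine MonoidHom.mem_ker.mpr (MulEquiv.ext fun m => Subtype.ext ?_)
  have hm : (m : G ⧸ N) ∈ A := hA <| by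
    rw [← Subgroup.map_commutator_of_surjective _ (QuotientGroup.mk'_surjective N)]
    exact Subgroup.mem_map_of_mem _ m.2
  have hmk : QuotientGroup.mk' N ⁅δ, (m : G)⁆ = 1 := by
    rw [map_commutatorElement, commutatorElement_eq_one_iff_mul_comm]
    exact setLike_mul_comm hδ hm
  have hcomm : ⁅δ, (m : G)⁆ ∈ N ⊓ commutator G :=
    ⟨(QuotientGroup.eq_one_iff _).mp hmk,
     Subgroup.commutator_mem_commutator (Subgroup.mem_top δ) (Subgroup.mem_top _)⟩
  rw [hN, Subgroup.mem_bot, commutatorElement_eq_one_iff_mul_comm] at hcomm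
  exact mul_inv_eq_of_eq_mul hcomm

theorem isCyclic_range_conjNormal {G : Type*} [Group G] {N : Subgroup G} [N.Normal]
    (hN : N ⊓ commutator G = ⊥) (hQ : IsAbelianByCyclic (G ⧸ N)) :
    IsCyclic (MulAut.conjNormal : G →* MulAut (commutator G)).range := by
  obtain ⟨A, _, _, _⟩ := hQ
  refine isCyclic_range_of_ker_le ((QuotientGroup.mk' A).comp (QuotientGroup.mk' N))
    ((QuotientGroup.mk'_surjective A).comp (QuotientGroup.mk'_surjective N)) _ ?_
  rw [← MonoidHom.comap_ker, QuotientGroup.ker_mk']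
  exact comap_le_ker_conjNormal hN
    (Subgroup.Normal.quotient_commutative_iff_commutator_le.mp inferInstance)

theorem range_conjOnCommutatorQuot {Δ : Type*} [Group Δ] (U : Subgroup Δ) [U.Normal] :
    (conjOnCommutatorQuot U).range =
      (MulAut.conjNormal : Δ ⧸ U →* MulAut (commutator (Δ ⧸ U))).range := by
  rw [conjOnCommutatorQuot, MonoidHom.range_comp,
    MonoidHom.range_eq_top_of_surjective _ (QuotientGroup.mk'_surjective U),
    ← MonoidHom.range_eq_map]

theorem conj_image_on_commutator_quot_cyclic_general
    (n : ℕ) (Δ : Type) [Group Δ] [Group.FG Δ]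
    (hfq : SameFiniteQuotients Δ (Lamplighter n))
    (U : Subgroup Δ) [U.Normal]
    (hUfin : (U.subgroupOf (commutator Δ)).FiniteIndex) :
    Finite (conjOnCommutatorQuot U).range ∧ IsCyclic (conjOnCommutatorQuot U).range := by
  have : ((QuotientGroup.mk' U).ker.subgroupOf (commutator Δ)).FiniteIndex := by
    rwa [QuotientGroup.ker_mk']
  have : Finite (commutator (Δ ⧸ U)) :=
    Subgroup.map_commutator_of_surjective _ (QuotientGroup.mk'_surjective U) ▸
      Subgroup.finite_map_of_finiteIndex_ker_subgroupOf _ _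
  obtain ⟨N, _, _, hN⟩ := exists_normal_finiteIndex_inf_commutator_eq_bot (Δ ⧸ U)
  obtain ⟨f, hf⟩ := (hfq _ inferInstance inferInstance).mp
    ⟨(QuotientGroup.mk' N).comp (QuotientGroup.mk' U),
      (QuotientGroup.mk'_surjective N).comp (QuotientGroup.mk'_surjective U)⟩
  rw [range_conjOnCommutatorQuot]
  exact ⟨inferInstance, isCyclic_range_conjNormal hN
    ((isAbelianByCyclic_lamplighter n).of_surjective f hf)⟩

/-- If `Δ` is a finitely generated residually finite group with the same finite quotients
as `Γ_n = ℤ^n ≀ ℤ`, `U ⊴ Δ` is contained in `[Δ,Δ]` with finite index in `[Δ,Δ]`, and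
`T = [Δ,Δ]/U`, then the image of the natural conjugation map `Δ → Aut(T)` is a finite
cyclic group. -/
theorem conj_image_on_commutator_quot_cyclic
    (n : ℕ) (hn : 1 ≤ n) (Δ : Type) [Group Δ] [Group.FG Δ]
    (hres : ResiduallyFinite Δ) (hfq : SameFiniteQuotients Δ (Lamplighter n))
    (U : Subgroup Δ) [U.Normal] (hUle : U ≤ commutator Δ)
    (hUfin : (U.subgroupOf (commutator Δ)).FiniteIndex) :
    Finite (conjOnCommutatorQuot U).range ∧ IsCyclic (conjOnCommutatorQuot U).range :=
  conj_image_on_commutator_quot_cyclic_general n Δ hfq U hUfin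
end

section
/- Let n ≥ 1 and let Γ_n = B ⋊ ℤ be the torsion-free lamplighter group with base subgroup B (the elements of the form (v, 0)). Then the centraliser in Γ_n of the derived subgroup [Γ_n, Γ_n] is exactly the base subgroup B. -/
open LaurentPolynomial

/-!
Commutators lie in the kernel of the projection onto the abelian group `ℤ`, i.e. in the abelian
base `B`, so `B` centralises `[Γ_n, Γ_n]`. Conversely `[(v, 0), (0, 1)] = ((1 - T) v, 0)`, and an
element `(w, z)` commuting with it must satisfy `T^z (1 - T) v = (1 - T) v`; taking `v` a basis
vector and using that `ℤ[T,T⁻¹]` is a domain forces `z = 0`.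
-/

open scoped commutatorElement

namespace SemidirectProduct

variable {N G : Type*}

theorem commutatorElement_inl_inr [Group N] [Group G] {φ : G →* MulAut N} (n : N) (g : G) :
    ⁅(inl n : N ⋊[φ] G), (inr g : N ⋊[φ] G)⁆ = inl (n * (φ g n)⁻¹) := by
  ext <;> simp [commutatorElement_def]

theorem commutator_le_range_inl [Group N] [CommGroup G] {φ : G →* MulAut N} :
    commutator (N ⋊[φ] G) ≤ inl.range :=
  range_inl_eq_ker_rightHom (φ := φ) ▸ Abelianization.commutator_subset_ker rightHom

theorem inl_mul_eq_mul_inl_iff [CommGroup N] [Group G] {φ : G →* MulAut N}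
    (n : N) (x : N ⋊[φ] G) : inl n * x = x * inl n ↔ φ x.right n = n := by
  simp [SemidirectProduct.ext_iff, mul_comm n, eq_comm]

variable [CommGroup N] [CommGroup G] {φ : G →* MulAut N}

theorem range_inl_le_centralizer_commutator :
    inl.range ≤ Subgroup.centralizer (commutator (N ⋊[φ] G) : Set (N ⋊[φ] G)) :=
  le_trans (Subgroup.le_centralizer _) (Subgroup.centralizer_le commutator_le_range_inl)

theorem centralizer_commutator_eq_range_inl
    (hφ : ∀ g : G, (∀ n t, φ g (n * (φ t n)⁻¹) = n * (φ t n)⁻¹) → g = 1) :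
    Subgroup.centralizer (commutator (N ⋊[φ] G) : Set (N ⋊[φ] G)) = inl.range := by
  refine le_antisymm (fun x hx => ?_) range_inl_le_centralizer_commutator
  rw [range_inl_eq_ker_rightHom, MonoidHom.mem_ker, rightHom_eq_right]
  refine hφ x.right fun n t => ?_
  have hmem : ⁅(inl n : N ⋊[φ] G), inr t⁆ ∈ commutator (N ⋊[φ] G) :=
    Subgroup.commutator_mem_commutator (Subgroup.mem_top _) (Subgroup.mem_top _)
  rw [← inl_mul_eq_mul_inl_iff, ← commutatorElement_inl_inr]
  exact Subgroup.mem_centralizer_iff.mp hx _ hmem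

end SemidirectProduct

namespace LaurentPolynomial

variable {R : Type*}

theorem T_injective [Semiring R] [Nontrivial R] : Function.Injective (T : ℤ → R[T;T⁻¹]) :=
  AddMonoidAlgebra.single_left_injective one_ne_zero

theorem T_mul_eq_self_iff [CommRing R] [IsDomain R] {z : ℤ} {p : R[T;T⁻¹]} (hp : p ≠ 0) :
    T z * p = p ↔ z = 0 := by
  conv_lhs => rhs; rw [← one_mul p]
  rw [mul_left_inj' hp, ← T_zero, T_injective.eq_iff]

end LaurentPolynomial

theorem lampAction_apply (n : ℕ) (z : Multiplicative ℤ) (v : Multiplicative (LampBase n))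
    (i : Fin n) : (lampAction n z v).toAdd i = T z.toAdd * v.toAdd i :=
  rfl

theorem lampAction_eq_one_of_fixes_commutators {n : ℕ} (hn : 1 ≤ n) (z : Multiplicative ℤ)
    (hz : ∀ v t, lampAction n z (v * (lampAction n t v)⁻¹) = v * (lampAction n t v)⁻¹) :
    z = 1 := by
  let i : Fin n := ⟨0, hn⟩
  have hfix := congrArg (fun w : Multiplicative (LampBase n) => w.toAdd i)
    (hz (.ofAdd (Pi.single i 1)) (.ofAdd 1))
  simp only [lampAction_apply, toAdd_mul, toAdd_inv, Pi.add_apply, Pi.neg_apply, toAdd_ofAdd,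
    Pi.single_eq_same, mul_one, ← sub_eq_add_neg] at hfix
  have h1T : (1 - T 1 : LaurentPolynomial ℤ) ≠ 0 :=
    sub_ne_zero.mpr (T_zero (R := ℤ) ▸ (T_injective.ne one_ne_zero).symm)
  exact toAdd_eq_zero.mp ((T_mul_eq_self_iff h1T).mp hfix)

/-- In the torsion-free lamplighter group `Γ_n = B ⋊ ℤ`, the centraliser of the derived
subgroup `[Γ_n, Γ_n]` is exactly the base subgroup `B` (the range of the canonical
inclusion of the base). -/
theorem centralizer_commutator_lamplighter (n : ℕ) (hn : 1 ≤ n) :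
    Subgroup.centralizer (commutator (Lamplighter n) : Set (Lamplighter n)) =
      (SemidirectProduct.inl :
        Multiplicative (LampBase n) →* Lamplighter n).range :=
  SemidirectProduct.centralizer_commutator_eq_range_inl
    (lampAction_eq_one_of_fixes_commutators hn)
end
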